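/- arXiv:2108.00365 — 5 statements merged into one kernel-verified Lean document; each statement's English description precedes it below -/
import Mathlib

section
/- Let S be a finite index set with probability weights (p_k), let μ > 0, and for each k ∈ S let F_k : E → ℝ be differentiable and μ-strongly convex. Then for any vectors w̄, w* ∈ E, any family (w_k)_{k∈S} in E, and any η > 0, one has −⟪w̄ − w*, ∑_{k∈S} p_k ∇F_k(w_k)⟫ ≤ (1/(2η)) ∑_{k∈S} p_k ‖w̄ − w_k‖² + (η/2) ∑_{k∈S} p_k ‖∇F_k(w_k)‖² − ∑_{k∈S} p_k (F_k(w_k) − F_k(w*)) − (μ/2) ∑_{k∈S} p_k ‖w_k − w*‖². -/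
/-!
Split `-⟪w̄ - w*, ∇F_k(w_k)⟫` as `⟪w_k - w̄, ∇F_k(w_k)⟫ + ⟪∇F_k(w_k), w* - w_k⟫`. The first term
is bounded by Young's inequality with parameter `η`, the second by strong convexity of `F_k`
between `w_k` and `w*`; averaging with the weights `p_k` gives the claim.
-/

open Finset InnerProductSpace

section

variable {E : Type*} [NormedAddCommGroup E] [InnerProductSpace ℝ E]

theorem real_inner_le_div_mul_norm_sq_add {η : ℝ} (hη : 0 < η) (x y : E) :
    ⟪x, y⟫_ℝ ≤ 1 / (2 * η) * ‖x‖ ^ 2 + η / 2 * ‖y‖ ^ 2 := by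
  have hsq : 0 ≤ ‖x - η • y‖ ^ 2 := sq_nonneg _
  rw [norm_sub_sq_real, real_inner_smul_right, norm_smul, Real.norm_of_nonneg hη.le,
    mul_pow] at hsq
  have hgap : 1 / (2 * η) * ‖x‖ ^ 2 + η / 2 * ‖y‖ ^ 2 - ⟪x, y⟫_ℝ
      = (‖x‖ ^ 2 - 2 * (η * ⟪x, y⟫_ℝ) + η ^ 2 * ‖y‖ ^ 2) / (2 * η) := by
    field_simp
    ring
  rw [← sub_nonneg, hgap]
  exact div_nonneg hsq (by positivity)

theorem neg_inner_sub_le_of_strongConvex_ineq {f : E → ℝ} {g w wb wstar : E} {μ η : ℝ}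
    (hη : 0 < η) (hf : f w + ⟪g, wstar - w⟫_ℝ + μ / 2 * ‖wstar - w‖ ^ 2 ≤ f wstar) :
    -⟪wb - wstar, g⟫_ℝ ≤
      1 / (2 * η) * ‖wb - w‖ ^ 2 + η / 2 * ‖g‖ ^ 2 - (f w - f wstar)
        - μ / 2 * ‖w - wstar‖ ^ 2 := by
  have hsplit : -⟪wb - wstar, g⟫_ℝ = ⟪w - wb, g⟫_ℝ + ⟪g, wstar - w⟫_ℝ := by
    simp only [inner_sub_right, real_inner_comm g]
    ring
  have hyoung := real_inner_le_div_mul_norm_sq_add hη (w - wb) g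
  rw [norm_sub_rev] at hyoung hf
  linarith

end

theorem global_local_gradient_product_general
    {E : Type*} [NormedAddCommGroup E] [InnerProductSpace ℝ E]
    {ι : Type*} (S : Finset ι) (p : ι → ℝ)
    (hp : ∀ k ∈ S, 0 ≤ p k)
    (μ : ℝ)
    (F : ι → E → ℝ) (F' : ι → E → E)
    (hconv : ∀ k ∈ S, ∀ v w : E,
      F k w + ⟪F' k w, v - w⟫_ℝ + μ / 2 * ‖v - w‖ ^ 2 ≤ F k v)
    (wb wstar : E) (w : ι → E) (η : ℝ) (hη : 0 < η) :
    -⟪wb - wstar, ∑ k ∈ S, p k • F' k (w k)⟫_ℝ ≤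
      (1 / (2 * η)) * ∑ k ∈ S, p k * ‖wb - w k‖ ^ 2
        + (η / 2) * ∑ k ∈ S, p k * ‖F' k (w k)‖ ^ 2
        - ∑ k ∈ S, p k * (F k (w k) - F k wstar)
        - (μ / 2) * ∑ k ∈ S, p k * ‖w k - wstar‖ ^ 2 := by
  calc -⟪wb - wstar, ∑ k ∈ S, p k • F' k (w k)⟫_ℝ
      = ∑ k ∈ S, p k * -⟪wb - wstar, F' k (w k)⟫_ℝ := by
        simp only [inner_sum, real_inner_smul_right, mul_neg, sum_neg_distrib]
    _ ≤ ∑ k ∈ S, p k * (1 / (2 * η) * ‖wb - w k‖ ^ 2 + η / 2 * ‖F' k (w k)‖ ^ 2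
          - (F k (w k) - F k wstar) - μ / 2 * ‖w k - wstar‖ ^ 2) :=
        sum_le_sum fun k hk => mul_le_mul_of_nonneg_left
          (neg_inner_sub_le_of_strongConvex_ineq hη (hconv k hk wstar (w k))) (hp k hk)
    _ = _ := by
        simp only [mul_sum, ← sum_add_distrib, ← sum_sub_distrib]
        exact sum_congr rfl fun k _ => by ring

/-- Lemma 1 (Global-Local Gradient Product). -/
theorem global_local_gradient_product
    {E : Type*} [NormedAddCommGroup E] [InnerProductSpace ℝ E] [CompleteSpace E]
    {ι : Type*} (S : Finset ι) (p : ι → ℝ)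
    (hp : ∀ k ∈ S, 0 ≤ p k) (hp1 : ∑ k ∈ S, p k = 1)
    (μ : ℝ) (hμ : 0 < μ)
    (F : ι → E → ℝ) (F' : ι → E → E)
    (hdiff : ∀ k ∈ S, ∀ x : E, HasGradientAt (F k) (F' k x) x)
    (hconv : ∀ k ∈ S, ∀ v w : E,
      F k w + ⟪F' k w, v - w⟫_ℝ + μ / 2 * ‖v - w‖ ^ 2 ≤ F k v)
    (wb wstar : E) (w : ι → E) (η : ℝ) (hη : 0 < η) :
    -⟪wb - wstar, ∑ k ∈ S, p k • F' k (w k)⟫_ℝ ≤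
      (1 / (2 * η)) * ∑ k ∈ S, p k * ‖wb - w k‖ ^ 2
        + (η / 2) * ∑ k ∈ S, p k * ‖F' k (w k)‖ ^ 2
        - ∑ k ∈ S, p k * (F k (w k) - F k wstar)
        - (μ / 2) * ∑ k ∈ S, p k * ‖w k - wstar‖ ^ 2 :=
  global_local_gradient_product_general S p hp μ F F' hconv wb wstar w η hη
end

section
/- Let S be a finite index set with probability weights (p_k). Let L > 0, μ ≥ 0, and for each k ∈ S let F_k : E → ℝ be differentiable, L-smooth and μ-strongly convex, and let F_k* ∈ ℝ satisfy F_k(w) ≥ F_k* for all w ∈ E. Let F* ∈ ℝ satisfy F_k* ≤ F* for all k ∈ S. Let η satisfy 0 < η < 1/(2L) and set v = 2η(1 − 2Lη). Then for any w̄ ∈ E and any family (w_k)_{k∈S} in E, −∑_{k∈S} p_k (F_k(w_k) − F_k*) ≤ −(1 − ηL) ∑_{k∈S} p_k (F_k(w̄) − F*) + (1/v) ∑_{k∈S} p_k ‖w_k − w̄‖². -/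
open Finset InnerProductSpace

/-!
For each `k`, smoothness at `w̄` tested at the gradient step `w̄ - ∇F_k(w̄) / L`, together with the
lower bound `F_k*`, gives `‖∇F_k(w̄)‖² ≤ 2L (F_k(w̄) - F_k*)`. Convexity and Young's inequality
with weight `η` give `F_k(w̄) - F_k(w_k) ≤ (η/2) ‖∇F_k(w̄)‖² + ‖w_k - w̄‖² / (2η)`. Combining the two,
replacing `F_k*` by `F* ≥ F_k*` and `1/(2η)` by the larger `1/v`, and averaging over `k` with the
weights `p_k` gives the lemma.
-/

section

variable {E : Type*} [NormedAddCommGroup E] [InnerProductSpace ℝ E]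

theorem real_inner_le_young {η : ℝ} (hη : 0 < η) (x y : E) :
    ⟪x, y⟫_ℝ ≤ η / 2 * ‖x‖ ^ 2 + 1 / (2 * η) * ‖y‖ ^ 2 := by
  have hyoung : ‖x‖ * ‖y‖ ≤ η / 2 * ‖x‖ ^ 2 + 1 / (2 * η) * ‖y‖ ^ 2 := by
    rw [← mul_le_mul_iff_left₀ (show 0 < 2 * η by positivity)]
    field_simp
    nlinarith [sq_nonneg (η * ‖x‖ - ‖y‖)]
  exact (real_inner_le_norm x y).trans hyoung

theorem sq_norm_le_of_smooth_of_lowerBound {f : E → ℝ} {g w : E} {L m : ℝ} (hL : 0 < L)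
    (hsmooth : ∀ v, f v ≤ f w + ⟪g, v - w⟫_ℝ + L / 2 * ‖v - w‖ ^ 2) (hm : ∀ v, m ≤ f v) :
    ‖g‖ ^ 2 ≤ 2 * L * (f w - m) := by
  have hstep := hsmooth (w - L⁻¹ • g)
  simp only [sub_sub_cancel_left, inner_neg_right, real_inner_smul_right,
    real_inner_self_eq_norm_sq, norm_neg, norm_smul, Real.norm_eq_abs, abs_inv,
    abs_of_pos hL] at hstep
  have hdecrease : L⁻¹ * ‖g‖ ^ 2 - L / 2 * (L⁻¹ * ‖g‖) ^ 2 ≤ f w - m := by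
    linarith [hm (w - L⁻¹ • g)]
  have hcoef : L⁻¹ * ‖g‖ ^ 2 - L / 2 * (L⁻¹ * ‖g‖) ^ 2 = ‖g‖ ^ 2 / (2 * L) := by
    field_simp
    ring
  rw [hcoef, div_le_iff₀ (by positivity)] at hdecrease
  linarith

theorem neg_sub_le_of_smooth_of_strongConvex {f : E → ℝ} {g w w' : E} {L μ m M η : ℝ}
    (hL : 0 < L) (hμ : 0 ≤ μ)
    (hsmooth : ∀ v, f v ≤ f w + ⟪g, v - w⟫_ℝ + L / 2 * ‖v - w‖ ^ 2)
    (hconv : f w + ⟪g, w' - w⟫_ℝ + μ / 2 * ‖w' - w‖ ^ 2 ≤ f w')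
    (hm : ∀ v, m ≤ f v) (hmM : m ≤ M) (hη0 : 0 < η) (hη : η < 1 / (2 * L)) :
    -(f w' - m) ≤ -(1 - η * L) * (f w - M) + 1 / (2 * η * (1 - 2 * L * η)) * ‖w' - w‖ ^ 2 := by
  have hηL : 2 * L * η < 1 := by
    rw [lt_div_iff₀ (by positivity)] at hη
    linarith
  have hgrad := sq_norm_le_of_smooth_of_lowerBound hL hsmooth hm
  have hyoung := real_inner_le_young hη0 (-g) (w' - w)
  rw [inner_neg_left, norm_neg] at hyoung
  have hcoef : 1 / (2 * η) ≤ 1 / (2 * η * (1 - 2 * L * η)) :=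
    one_div_le_one_div_of_le (mul_pos (by positivity) (by linarith))
      (by nlinarith [mul_pos (mul_pos hL hη0) hη0])
  have hgrad' := mul_le_mul_of_nonneg_left hgrad (show 0 ≤ η / 2 by positivity)
  have hmM' := mul_le_mul_of_nonneg_left hmM (show 0 ≤ 1 - η * L by linarith)
  have hcoef' := mul_le_mul_of_nonneg_right hcoef (sq_nonneg ‖w' - w‖)
  have hμ' := mul_nonneg hμ (sq_nonneg ‖w' - w‖)
  linarith

end

theorem local_parameter_optimal_gap_general
    {E : Type*} [NormedAddCommGroup E] [InnerProductSpace ℝ E]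
    {ι : Type*} (S : Finset ι) (p : ι → ℝ)
    (hp : ∀ k ∈ S, 0 ≤ p k)
    (L μ : ℝ) (hL : 0 < L) (hμ : 0 ≤ μ)
    (F : ι → E → ℝ) (F' : ι → E → E)
    (hsmooth : ∀ k ∈ S, ∀ v w : E,
      F k v ≤ F k w + ⟪F' k w, v - w⟫_ℝ + L / 2 * ‖v - w‖ ^ 2)
    (hconv : ∀ k ∈ S, ∀ v w : E,
      F k w + ⟪F' k w, v - w⟫_ℝ + μ / 2 * ‖v - w‖ ^ 2 ≤ F k v)
    (Fstar : ι → ℝ) (hFstar : ∀ k ∈ S, ∀ x : E, Fstar k ≤ F k x)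
    (Fs : ℝ) (hFs : ∀ k ∈ S, Fstar k ≤ Fs)
    (η : ℝ) (hη0 : 0 < η) (hη : η < 1 / (2 * L))
    (wb : E) (w : ι → E) :
    -∑ k ∈ S, p k * (F k (w k) - Fstar k) ≤
      -(1 - η * L) * ∑ k ∈ S, p k * (F k wb - Fs)
        + (1 / (2 * η * (1 - 2 * L * η))) * ∑ k ∈ S, p k * ‖w k - wb‖ ^ 2 :=
  calc -∑ k ∈ S, p k * (F k (w k) - Fstar k)
      = ∑ k ∈ S, p k * -(F k (w k) - Fstar k) := by simp only [mul_neg, sum_neg_distrib]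
    _ ≤ ∑ k ∈ S, p k * (-(1 - η * L) * (F k wb - Fs)
          + 1 / (2 * η * (1 - 2 * L * η)) * ‖w k - wb‖ ^ 2) :=
      sum_le_sum fun k hk => mul_le_mul_of_nonneg_left
        (neg_sub_le_of_smooth_of_strongConvex hL hμ (hsmooth k hk · wb) (hconv k hk (w k) wb)
          (hFstar k hk) (hFs k hk) hη0 hη) (hp k hk)
    _ = _ := by
      rw [mul_sum, mul_sum, ← sum_add_distrib]
      exact sum_congr rfl fun k _ => by ring

/-- Lemma 2 (Local Parameter-Optimal Gap). -/
theorem local_parameter_optimal_gap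
    {E : Type*} [NormedAddCommGroup E] [InnerProductSpace ℝ E] [CompleteSpace E]
    {ι : Type*} (S : Finset ι) (p : ι → ℝ)
    (hp : ∀ k ∈ S, 0 ≤ p k) (hp1 : ∑ k ∈ S, p k = 1)
    (L μ : ℝ) (hL : 0 < L) (hμ : 0 ≤ μ)
    (F : ι → E → ℝ) (F' : ι → E → E)
    (hdiff : ∀ k ∈ S, ∀ x : E, HasGradientAt (F k) (F' k x) x)
    (hsmooth : ∀ k ∈ S, ∀ v w : E,
      F k v ≤ F k w + ⟪F' k w, v - w⟫_ℝ + L / 2 * ‖v - w‖ ^ 2)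
    (hconv : ∀ k ∈ S, ∀ v w : E,
      F k w + ⟪F' k w, v - w⟫_ℝ + μ / 2 * ‖v - w‖ ^ 2 ≤ F k v)
    (Fstar : ι → ℝ) (hFstar : ∀ k ∈ S, ∀ x : E, Fstar k ≤ F k x)
    (Fs : ℝ) (hFs : ∀ k ∈ S, Fstar k ≤ Fs)
    (η : ℝ) (hη0 : 0 < η) (hη : η < 1 / (2 * L))
    (wb : E) (w : ι → E) :
    -∑ k ∈ S, p k * (F k (w k) - Fstar k) ≤
      -(1 - η * L) * ∑ k ∈ S, p k * (F k wb - Fs)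
        + (1 / (2 * η * (1 - 2 * L * η))) * ∑ k ∈ S, p k * ‖w k - wb‖ ^ 2 :=
  local_parameter_optimal_gap_general S p hp L μ hL hμ F F' hsmooth hconv Fstar hFstar Fs hFs η hη0
    hη wb w
end

section
/- Let (Ω, 𝒜, P) be a probability space, S a finite index set with probability weights (p_k), τ a positive integer, G ≥ 0 and η ≥ 0. Let w₀ ∈ ℝ^n, let η_1,…,η_τ be reals with 0 ≤ η_i ≤ 2η, and for each k ∈ S and i = 1,…,τ let g_{k,i} : Ω → ℝ^n be a measurable random vector with ∫‖g_{k,i}‖² dP ≤ G². Define the random vectors w_k = w₀ − ∑_{i=1}^τ η_i g_{k,i} and w̄ = ∑_{k∈S} p_k w_k. Then ∫ ∑_{k∈S} p_k ‖w̄ − w_k‖² dP ≤ 16 η² τ² G². -/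
/-!
Each local iterate is `w₀ - u_k` with `u_k = ∑ᵢ ηᵢ g_{k,i}`. Comparing `w̄` and `w_k` through
the common point `w₀` and using `(a + b)² ≤ 2a² + 2b²` together with Jensen's inequality for
`‖·‖²` bounds the weighted dispersion by `4 ∑ₖ pₖ ‖u_k‖²`. Cauchy–Schwarz over the `τ` steps
gives `‖u_k‖² ≤ (2η)² τ ∑ᵢ ‖g_{k,i}‖²`, and each second moment is at most `G²`.
-/

open Finset MeasureTheory

section Dispersion

variable {ι κ E : Type*} [NormedAddCommGroup E] [NormedSpace ℝ E]

theorem norm_sum_smul_sq_le_sum_mul_norm_sq {s : Finset ι} {p : ι → ℝ}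
    (hp : ∀ k ∈ s, 0 ≤ p k) (hp1 : ∑ k ∈ s, p k = 1) (x : ι → E) :
    ‖∑ k ∈ s, p k • x k‖ ^ 2 ≤ ∑ k ∈ s, p k * ‖x k‖ ^ 2 :=
  (convexOn_univ_norm.pow (fun _ _ => norm_nonneg _) 2).map_sum_le hp hp1
    (fun _ _ => Set.mem_univ _)

theorem sum_mul_norm_sum_smul_sub_sq_le {s : Finset ι} {p : ι → ℝ}
    (hp : ∀ k ∈ s, 0 ≤ p k) (hp1 : ∑ k ∈ s, p k = 1) (x : ι → E) (c : E) :
    ∑ k ∈ s, p k * ‖∑ j ∈ s, p j • x j - x k‖ ^ 2 ≤ 4 * ∑ k ∈ s, p k * ‖x k - c‖ ^ 2 := by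
  set D := ∑ k ∈ s, p k * ‖x k - c‖ ^ 2
  have hmean : ‖∑ j ∈ s, p j • x j - c‖ ^ 2 ≤ D := by
    have : ∑ j ∈ s, p j • x j - c = ∑ j ∈ s, p j • (x j - c) := by
      simp only [smul_sub, sum_sub_distrib, ← sum_smul, hp1, one_smul]
    rw [this]
    exact norm_sum_smul_sq_le_sum_mul_norm_sq hp hp1 _
  have hterm : ∀ k ∈ s, p k * ‖∑ j ∈ s, p j • x j - x k‖ ^ 2
      ≤ p k * (2 * D + 2 * ‖x k - c‖ ^ 2) := by
    intro k hk
    refine mul_le_mul_of_nonneg_left ?_ (hp k hk)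
    have htri : ‖∑ j ∈ s, p j • x j - x k‖ ≤ ‖∑ j ∈ s, p j • x j - c‖ + ‖x k - c‖ :=
      norm_sub_le_norm_sub_add_norm_sub _ _ _ |>.trans_eq (by rw [norm_sub_rev c])
    nlinarith [norm_nonneg (∑ j ∈ s, p j • x j - x k),
      sq_nonneg (‖∑ j ∈ s, p j • x j - c‖ - ‖x k - c‖)]
  calc ∑ k ∈ s, p k * ‖∑ j ∈ s, p j • x j - x k‖ ^ 2
      ≤ ∑ k ∈ s, p k * (2 * D + 2 * ‖x k - c‖ ^ 2) := sum_le_sum hterm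
    _ = (∑ k ∈ s, p k) * (2 * D) + 2 * D := by
      rw [sum_mul, mul_sum]
      simp only [mul_add, sum_add_distrib, mul_left_comm (p _) 2]
    _ = 4 * D := by rw [hp1]; ring

theorem norm_sum_smul_sq_le_sq_mul_card_mul {s : Finset ι} {a : ι → ℝ} {c : ℝ}
    (ha : ∀ i ∈ s, ‖a i‖ ≤ c) (v : ι → E) :
    ‖∑ i ∈ s, a i • v i‖ ^ 2 ≤ c ^ 2 * #s * ∑ i ∈ s, ‖v i‖ ^ 2 := by
  have hnorm : ‖∑ i ∈ s, a i • v i‖ ≤ c * ∑ i ∈ s, ‖v i‖ := by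
    refine (norm_sum_le _ _).trans ?_
    rw [mul_sum]
    exact sum_le_sum fun i hi => by
      rw [norm_smul]; exact mul_le_mul_of_nonneg_right (ha i hi) (norm_nonneg _)
  calc ‖∑ i ∈ s, a i • v i‖ ^ 2 ≤ c ^ 2 * (∑ i ∈ s, ‖v i‖) ^ 2 := by
        rw [← mul_pow]; exact pow_le_pow_left₀ (norm_nonneg _) hnorm 2
    _ ≤ c ^ 2 * (#s * ∑ i ∈ s, ‖v i‖ ^ 2) :=
        mul_le_mul_of_nonneg_left sq_sum_le_card_mul_sum_sq (sq_nonneg c)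
    _ = c ^ 2 * #s * ∑ i ∈ s, ‖v i‖ ^ 2 := by ring

theorem sum_mul_norm_sum_smul_sub_sq_le_of_eq_sub_sum {S : Finset ι} {p : ι → ℝ}
    (hp : ∀ k ∈ S, 0 ≤ p k) (hp1 : ∑ k ∈ S, p k = 1) {s : Finset κ} {a : κ → ℝ} {c : ℝ}
    (ha : ∀ i ∈ s, ‖a i‖ ≤ c) (x₀ : E) (v : ι → κ → E) (x : ι → E) (hx : ∀ k ∈ S, x k = x₀ - ∑ i ∈ s, a i • v k i) :
    ∑ k ∈ S, p k * ‖∑ j ∈ S, p j • x j - x k‖ ^ 2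
      ≤ 4 * c ^ 2 * #s * ∑ k ∈ S, p k * ∑ i ∈ s, ‖v k i‖ ^ 2 := calc
  _ ≤ 4 * ∑ k ∈ S, p k * ‖x k - x₀‖ ^ 2 := sum_mul_norm_sum_smul_sub_sq_le hp hp1 x x₀
  _ ≤ 4 * ∑ k ∈ S, p k * (c ^ 2 * #s * ∑ i ∈ s, ‖v k i‖ ^ 2) := by
    gcongr with k hk
    · exact hp k hk
    rw [hx k hk, sub_sub_cancel_left, norm_neg]
    exact norm_sum_smul_sq_le_sq_mul_card_mul ha (v k)
  _ = 4 * c ^ 2 * #s * ∑ k ∈ S, p k * ∑ i ∈ s, ‖v k i‖ ^ 2 := by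
    rw [mul_sum, mul_sum]; exact sum_congr rfl fun _ _ => by ring

end Dispersion

theorem integral_sum_mul_sum_le_card_mul {Ω ι κ : Type*} [MeasurableSpace Ω] {P : Measure Ω}
    {S : Finset ι} {p : ι → ℝ} (hp : ∀ k ∈ S, 0 ≤ p k) (hp1 : ∑ k ∈ S, p k = 1)
    {s : Finset κ} {f : ι → κ → Ω → ℝ} {B : ℝ}
    (hf : ∀ k ∈ S, ∀ i ∈ s, Integrable (f k i) P) (hB : ∀ k ∈ S, ∀ i ∈ s, ∫ ω, f k i ω ∂P ≤ B) :
    ∫ ω, ∑ k ∈ S, p k * ∑ i ∈ s, f k i ω ∂P ≤ #s * B := by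
  have hinner : ∀ k ∈ S, Integrable (fun ω => ∑ i ∈ s, f k i ω) P :=
    fun k hk => integrable_finsetSum _ (hf k hk)
  calc ∫ ω, ∑ k ∈ S, p k * ∑ i ∈ s, f k i ω ∂P
      = ∑ k ∈ S, p k * ∑ i ∈ s, ∫ ω, f k i ω ∂P := by
        rw [integral_finsetSum _ fun k hk => (hinner k hk).const_mul _]
        refine sum_congr rfl fun k hk => ?_
        rw [integral_const_mul, integral_finsetSum _ (hf k hk)]
    _ ≤ ∑ k ∈ S, p k * (#s * B) := by
        refine sum_le_sum fun k hk => mul_le_mul_of_nonneg_left ?_ (hp k hk)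
        simpa using sum_le_sum (hB k hk)
    _ = #s * B := by rw [← sum_mul, hp1, one_mul]

theorem client_heterogeneous_bound_general
    {Ω : Type*} [MeasurableSpace Ω] (P : Measure Ω)
    {ι : Type*} (S : Finset ι) (p : ι → ℝ)
    (hp : ∀ k ∈ S, 0 ≤ p k) (hp1 : ∑ k ∈ S, p k = 1)
    (n : ℕ) (τ : ℕ) (G η : ℝ)
    (w₀ : EuclideanSpace ℝ (Fin n))
    (ηs : Fin τ → ℝ) (hηs : ∀ i, 0 ≤ ηs i ∧ ηs i ≤ 2 * η)
    (g : ι → Fin τ → Ω → EuclideanSpace ℝ (Fin n))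
    (hint : ∀ k ∈ S, ∀ i : Fin τ, Integrable (fun ω => ‖g k i ω‖ ^ 2) P)
    (hmom : ∀ k ∈ S, ∀ i : Fin τ, ∫ ω, ‖g k i ω‖ ^ 2 ∂P ≤ G ^ 2)
    (w : ι → Ω → EuclideanSpace ℝ (Fin n))
    (hw : ∀ k ∈ S, ∀ ω, w k ω = w₀ - ∑ i, ηs i • g k i ω)
    (wbar : Ω → EuclideanSpace ℝ (Fin n))
    (hwbar : ∀ ω, wbar ω = ∑ k ∈ S, p k • w k ω) :
    ∫ ω, ∑ k ∈ S, p k * ‖wbar ω - w k ω‖ ^ 2 ∂P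
      ≤ 16 * η ^ 2 * (τ : ℝ) ^ 2 * G ^ 2 := by
  have hstep : ∀ i ∈ (univ : Finset (Fin τ)), ‖ηs i‖ ≤ 2 * η := fun i _ => by
    rw [Real.norm_of_nonneg (hηs i).1]; exact (hηs i).2
  have hpoint (ω : Ω) : ∑ k ∈ S, p k * ‖wbar ω - w k ω‖ ^ 2
      ≤ 4 * (2 * η) ^ 2 * τ * ∑ k ∈ S, p k * ∑ i, ‖g k i ω‖ ^ 2 := by
    simpa [hwbar] using sum_mul_norm_sum_smul_sub_sq_le_of_eq_sub_sum hp hp1 hstep w₀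
      (g · · ω) (w · ω) fun k hk => hw k hk ω
  have hdom : Integrable (fun ω => ∑ k ∈ S, p k * ∑ i, ‖g k i ω‖ ^ 2) P :=
    integrable_finsetSum _ fun k hk =>
      (integrable_finsetSum _ fun i _ => hint k hk i).const_mul _
  calc ∫ ω, ∑ k ∈ S, p k * ‖wbar ω - w k ω‖ ^ 2 ∂P
      ≤ ∫ ω, 4 * (2 * η) ^ 2 * τ * ∑ k ∈ S, p k * ∑ i, ‖g k i ω‖ ^ 2 ∂P :=
        integral_mono_of_nonneg (.of_forall fun ω => sum_nonneg fun k hk =>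
          mul_nonneg (hp k hk) (sq_nonneg _)) (hdom.const_mul _) (.of_forall hpoint)
    _ ≤ 4 * (2 * η) ^ 2 * τ * (τ * G ^ 2) := by
        rw [integral_const_mul]
        gcongr
        simpa using integral_sum_mul_sum_le_card_mul (s := univ) hp hp1
          (fun k hk i _ => hint k hk i) (fun k hk i _ => hmom k hk i)
    _ = 16 * η ^ 2 * (τ : ℝ) ^ 2 * G ^ 2 := by ring

/-- Lemma 3 (Client Heterogeneous Bound): the expected weighted dispersion of local SGD
iterates around their weighted average, after `τ` local steps from a common initialization
`w₀` with step sizes bounded by `2η` and stochastic gradients of second moment at most `G²`,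
is at most `16 η² τ² G²`. -/
theorem client_heterogeneous_bound
    {Ω : Type*} [MeasurableSpace Ω] (P : Measure Ω) [IsProbabilityMeasure P]
    {ι : Type*} (S : Finset ι) (p : ι → ℝ)
    (hp : ∀ k ∈ S, 0 ≤ p k) (hp1 : ∑ k ∈ S, p k = 1)
    (n : ℕ) (τ : ℕ) (hτ : 0 < τ) (G η : ℝ) (hG : 0 ≤ G) (hη : 0 ≤ η)
    (w₀ : EuclideanSpace ℝ (Fin n))
    (ηs : Fin τ → ℝ) (hηs : ∀ i, 0 ≤ ηs i ∧ ηs i ≤ 2 * η)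
    (g : ι → Fin τ → Ω → EuclideanSpace ℝ (Fin n))
    (hmeas : ∀ k ∈ S, ∀ i : Fin τ, Measurable (g k i))
    (hint : ∀ k ∈ S, ∀ i : Fin τ, Integrable (fun ω => ‖g k i ω‖ ^ 2) P)
    (hmom : ∀ k ∈ S, ∀ i : Fin τ, ∫ ω, ‖g k i ω‖ ^ 2 ∂P ≤ G ^ 2)
    (w : ι → Ω → EuclideanSpace ℝ (Fin n))
    (hw : ∀ k ∈ S, ∀ ω, w k ω = w₀ - ∑ i, ηs i • g k i ω)
    (wbar : Ω → EuclideanSpace ℝ (Fin n))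
    (hwbar : ∀ ω, wbar ω = ∑ k ∈ S, p k • w k ω) :
    ∫ ω, ∑ k ∈ S, p k * ‖wbar ω - w k ω‖ ^ 2 ∂P
      ≤ 16 * η ^ 2 * (τ : ℝ) ^ 2 * G ^ 2 :=
  client_heterogeneous_bound_general P S p hp hp1 n τ G η w₀ ηs hηs g hint hmom w hw wbar hwbar
end

section
/- Let S be a finite index set with probability weights (p_k). Let L > 0, μ > 0, and for each k ∈ S let F_k : E → ℝ be differentiable, L-smooth and μ-strongly convex, and let F_k* ∈ ℝ satisfy F_k(w) ≥ F_k* for all w ∈ E. Let η satisfy 0 < η < 1/(2L). Then for any vectors w̄, w* ∈ E and any family (w_k)_{k∈S} in E, ‖w̄ − η ∑_{k∈S} p_k ∇F_k(w_k) − w*‖² ≤ ‖w̄ − w*‖² − 2η(1 − 2Lη)(1 − ηL) ∑_{k∈S} p_k (F_k(w̄) − F_k*) + 2η ∑_{k∈S} p_k (F_k(w*) − F_k*) + 2 ∑_{k∈S} p_k ‖w̄ − w_k‖² − ημ ∑_{k∈S} p_k ‖w_k − w*‖². -/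
/-!
Write `ḡ = ∑ p_k ∇F_k(w_k)` and expand `‖(w̄ - w*) - η ḡ‖²`; by Jensen, `‖ḡ‖²` is at most the
average of `‖∇F_k(w_k)‖²`, so it suffices to bound each client's contribution
`-2η ⟪∇F_k(w_k), w̄ - w*⟫ + η² ‖∇F_k(w_k)‖²`. Splitting `w̄ - w* = (w̄ - w_k) + (w_k - w*)`,
the first inner product is absorbed by Young's inequality and the second by strong convexity at
`w_k`. The gradient norms are at most `2L (F_k - F_k*)` (take a gradient step of length `1/L`),
and `F_k(w_k)` is compared with `F_k(w̄)` through convexity at `w̄` and Young once more; this last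
comparison enters with the factor `1 - 2Lη`, which is where `η < 1/(2L)` is needed.
-/

open Finset InnerProductSpace

section
variable {E : Type*} [NormedAddCommGroup E] [InnerProductSpace ℝ E]

lemma two_mul_mul_real_inner_le (c : ℝ) (x y : E) :
    2 * c * ⟪x, y⟫_ℝ ≤ c ^ 2 * ‖x‖ ^ 2 + ‖y‖ ^ 2 := by
  have h := norm_sub_sq_real (c • x) y
  rw [real_inner_smul_left, norm_smul, Real.norm_eq_abs, mul_pow, sq_abs] at h
  nlinarith [sq_nonneg ‖c • x - y‖]

lemma norm_sq_le_of_smooth_of_forall_le {L : ℝ} (hL : 0 < L) {f : E → ℝ} {x g : E}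
    (hsmooth : ∀ v, f v ≤ f x + ⟪g, v - x⟫_ℝ + L / 2 * ‖v - x‖ ^ 2)
    {m : ℝ} (hm : ∀ y, m ≤ f y) :
    ‖g‖ ^ 2 ≤ 2 * L * (f x - m) := by
  have h := hsmooth (x - L⁻¹ • g)
  rw [sub_sub_cancel_left, inner_neg_right, real_inner_smul_right, real_inner_self_eq_norm_sq,
    norm_neg, norm_smul, Real.norm_eq_abs, abs_of_pos (inv_pos.mpr hL)] at h
  have hstep : L / 2 * (L⁻¹ * ‖g‖) ^ 2 = L⁻¹ * ‖g‖ ^ 2 / 2 := by field_simp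
  have hdecrease : L⁻¹ * ‖g‖ ^ 2 ≤ 2 * (f x - m) := by linarith [hm (x - L⁻¹ • g)]
  calc ‖g‖ ^ 2 = L * (L⁻¹ * ‖g‖ ^ 2) := by field_simp
    _ ≤ L * (2 * (f x - m)) := by gcongr
    _ = 2 * L * (f x - m) := by ring

lemma suboptimality_ge_of_convex_of_smooth {L : ℝ} (hL : 0 < L) {f : E → ℝ} {x g : E}
    (hconvex : ∀ v, f x + ⟪g, v - x⟫_ℝ ≤ f v)
    (hsmooth : ∀ v, f v ≤ f x + ⟪g, v - x⟫_ℝ + L / 2 * ‖v - x‖ ^ 2)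
    {m : ℝ} (hm : ∀ y, m ≤ f y) {η : ℝ} (hη : 0 ≤ η) (v : E) :
    2 * η * (1 - η * L) * (f x - m) - ‖x - v‖ ^ 2 ≤ 2 * η * (f v - m) := by
  have hgrad := norm_sq_le_of_smooth_of_forall_le hL hsmooth hm
  have hyoung := two_mul_mul_real_inner_le η g (x - v)
  have hinner : ⟪g, v - x⟫_ℝ = -⟪g, x - v⟫_ℝ := by rw [← inner_neg_right, neg_sub]
  have := mul_le_mul_of_nonneg_left (hconvex v) (by positivity : (0 : ℝ) ≤ 2 * η)
  rw [hinner] at this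
  nlinarith [mul_le_mul_of_nonneg_left hgrad (sq_nonneg η)]

lemma client_step_le {L μ η : ℝ} (hL : 0 < L) (hμ : 0 ≤ μ) (hη : 0 ≤ η)
    (hLη : 2 * L * η ≤ 1) {f : E → ℝ} {g : E → E}
    (hsmooth : ∀ v x, f v ≤ f x + ⟪g x, v - x⟫_ℝ + L / 2 * ‖v - x‖ ^ 2)
    (hconvex : ∀ v x, f x + ⟪g x, v - x⟫_ℝ + μ / 2 * ‖v - x‖ ^ 2 ≤ f v)
    {m : ℝ} (hm : ∀ y, m ≤ f y) (wb wstar wk : E) :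
    -(2 * η) * ⟪g wk, wb - wstar⟫_ℝ + η ^ 2 * ‖g wk‖ ^ 2 ≤
      2 * ‖wb - wk‖ ^ 2 - 2 * η * (1 - 2 * L * η) * (1 - η * L) * (f wb - m)
        + 2 * η * (f wstar - m) - η * μ * ‖wk - wstar‖ ^ 2 := by
  have hsplit : ⟪g wk, wb - wstar⟫_ℝ = ⟪g wk, wb - wk⟫_ℝ - ⟪g wk, wstar - wk⟫_ℝ := by
    rw [← inner_sub_right, sub_sub_sub_cancel_right]
  have hyoung := two_mul_mul_real_inner_le (-η) (g wk) (wb - wk)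
  have hstrong := hconvex wstar wk
  rw [norm_sub_rev] at hstrong
  have hgrad := norm_sq_le_of_smooth_of_forall_le hL (hsmooth · wk) hm
  have hwb := suboptimality_ge_of_convex_of_smooth hL
    (fun v => (le_add_of_nonneg_right (by positivity)).trans (hconvex v wb)) (hsmooth · wb) hm hη wk
  rw [hsplit]
  nlinarith [mul_le_mul_of_nonneg_left hwb (by linarith : 0 ≤ 1 - 2 * L * η),
    mul_le_mul_of_nonneg_left hgrad (sq_nonneg η),
    mul_le_mul_of_nonneg_left hstrong (by positivity : (0 : ℝ) ≤ 2 * η),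
    mul_nonneg (mul_nonneg hL.le hη) (sq_nonneg ‖wb - wk‖)]

lemma norm_sub_smul_sum_sq_le {ι : Type*} {s : Finset ι} {p : ι → ℝ}
    (hp : ∀ k ∈ s, 0 ≤ p k) (hp1 : ∑ k ∈ s, p k = 1) (η : ℝ) (x : E) (g : ι → E) :
    ‖x - η • ∑ k ∈ s, p k • g k‖ ^ 2 ≤
      ‖x‖ ^ 2 + ∑ k ∈ s, p k * (-(2 * η) * ⟪g k, x⟫_ℝ + η ^ 2 * ‖g k‖ ^ 2) := by
  have hjensen : ‖∑ k ∈ s, p k • g k‖ ^ 2 ≤ ∑ k ∈ s, p k * ‖g k‖ ^ 2 :=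
    (convexOn_univ_norm.pow (fun _ _ => norm_nonneg _) 2).map_sum_le hp hp1 (by simp)
  have hinner : ⟪x, ∑ k ∈ s, p k • g k⟫_ℝ = ∑ k ∈ s, p k * ⟪g k, x⟫_ℝ := by
    simp only [inner_sum, real_inner_smul_right, real_inner_comm x]
  have hsum : ∑ k ∈ s, p k * (-(2 * η) * ⟪g k, x⟫_ℝ + η ^ 2 * ‖g k‖ ^ 2) =
      -(2 * η) * ∑ k ∈ s, p k * ⟪g k, x⟫_ℝ + η ^ 2 * ∑ k ∈ s, p k * ‖g k‖ ^ 2 := by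
    simp only [mul_sum, ← sum_add_distrib]
    exact sum_congr rfl fun _ _ => by ring
  rw [norm_sub_sq_real, real_inner_smul_right, hinner, norm_smul, mul_pow, Real.norm_eq_abs,
    sq_abs, hsum]
  linarith [mul_le_mul_of_nonneg_left hjensen (sq_nonneg η)]

end

theorem one_step_descent_general
    {E : Type*} [NormedAddCommGroup E] [InnerProductSpace ℝ E]
    {ι : Type*} (S : Finset ι) (p : ι → ℝ)
    (hp : ∀ k ∈ S, 0 ≤ p k) (hp1 : ∑ k ∈ S, p k = 1)
    (L μ : ℝ) (hL : 0 < L) (hμ : 0 < μ)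
    (F : ι → E → ℝ) (F' : ι → E → E)
    (hsmooth : ∀ k ∈ S, ∀ v w : E,
      F k v ≤ F k w + ⟪F' k w, v - w⟫_ℝ + L / 2 * ‖v - w‖ ^ 2)
    (hconv : ∀ k ∈ S, ∀ v w : E,
      F k w + ⟪F' k w, v - w⟫_ℝ + μ / 2 * ‖v - w‖ ^ 2 ≤ F k v)
    (Fstar : ι → ℝ) (hFstar : ∀ k ∈ S, ∀ x : E, Fstar k ≤ F k x)
    (η : ℝ) (hη0 : 0 < η) (hη : η < 1 / (2 * L))
    (wb wstar : E) (w : ι → E) :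
    ‖wb - η • ∑ k ∈ S, p k • F' k (w k) - wstar‖ ^ 2 ≤
      ‖wb - wstar‖ ^ 2
        - 2 * η * (1 - 2 * L * η) * (1 - η * L) * ∑ k ∈ S, p k * (F k wb - Fstar k)
        + 2 * η * ∑ k ∈ S, p k * (F k wstar - Fstar k)
        + 2 * ∑ k ∈ S, p k * ‖wb - w k‖ ^ 2
        - η * μ * ∑ k ∈ S, p k * ‖w k - wstar‖ ^ 2 := by
  have hLη : 2 * L * η ≤ 1 := by
    rw [lt_div_iff₀ (by positivity)] at hη
    linarith
  calc ‖wb - η • ∑ k ∈ S, p k • F' k (w k) - wstar‖ ^ 2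
      = ‖(wb - wstar) - η • ∑ k ∈ S, p k • F' k (w k)‖ ^ 2 := by rw [sub_right_comm]
    _ ≤ ‖wb - wstar‖ ^ 2 + ∑ k ∈ S, p k *
          (-(2 * η) * ⟪F' k (w k), wb - wstar⟫_ℝ + η ^ 2 * ‖F' k (w k)‖ ^ 2) :=
      norm_sub_smul_sum_sq_le hp hp1 η _ _
    _ ≤ ‖wb - wstar‖ ^ 2 + ∑ k ∈ S, p k * (2 * ‖wb - w k‖ ^ 2
          - 2 * η * (1 - 2 * L * η) * (1 - η * L) * (F k wb - Fstar k)
          + 2 * η * (F k wstar - Fstar k) - η * μ * ‖w k - wstar‖ ^ 2) := by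
      gcongr with k hk
      · exact hp k hk
      · exact client_step_le hL hμ.le hη0.le hLη (hsmooth k hk) (hconv k hk) (hFstar k hk) _ _ _
    _ = _ := by
      simp only [mul_sub, mul_add, sum_sub_distrib, sum_add_distrib, mul_left_comm (p _),
        ← mul_sum]
      ring

/-- Deterministic one-step descent inequality from the proof of Theorem 1. -/
theorem one_step_descent
    {E : Type*} [NormedAddCommGroup E] [InnerProductSpace ℝ E] [CompleteSpace E]
    {ι : Type*} (S : Finset ι) (p : ι → ℝ)
    (hp : ∀ k ∈ S, 0 ≤ p k) (hp1 : ∑ k ∈ S, p k = 1)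
    (L μ : ℝ) (hL : 0 < L) (hμ : 0 < μ)
    (F : ι → E → ℝ) (F' : ι → E → E)
    (hdiff : ∀ k ∈ S, ∀ x : E, HasGradientAt (F k) (F' k x) x)
    (hsmooth : ∀ k ∈ S, ∀ v w : E,
      F k v ≤ F k w + ⟪F' k w, v - w⟫_ℝ + L / 2 * ‖v - w‖ ^ 2)
    (hconv : ∀ k ∈ S, ∀ v w : E,
      F k w + ⟪F' k w, v - w⟫_ℝ + μ / 2 * ‖v - w‖ ^ 2 ≤ F k v)
    (Fstar : ι → ℝ) (hFstar : ∀ k ∈ S, ∀ x : E, Fstar k ≤ F k x)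
    (η : ℝ) (hη0 : 0 < η) (hη : η < 1 / (2 * L))
    (wb wstar : E) (w : ι → E) :
    ‖wb - η • ∑ k ∈ S, p k • F' k (w k) - wstar‖ ^ 2 ≤
      ‖wb - wstar‖ ^ 2
        - 2 * η * (1 - 2 * L * η) * (1 - η * L) * ∑ k ∈ S, p k * (F k wb - Fstar k)
        + 2 * η * ∑ k ∈ S, p k * (F k wstar - Fstar k)
        + 2 * ∑ k ∈ S, p k * ‖wb - w k‖ ^ 2
        - η * μ * ∑ k ∈ S, p k * ‖w k - wstar‖ ^ 2 :=
  one_step_descent_general S p hp hp1 L μ hL hμ F F' hsmooth hconv Fstar hFstar η hη0 hη wb wstar w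
end

section
/- Let (Δ_t)_{t≥1} be a sequence of nonnegative reals, and let μ' > 0, C ≥ 0, D ≥ 0, β > 0, γ > 0 satisfy βμ' > 1 and γ + 1 ≥ βμ'. Set η_t = β/(t + γ) and suppose Δ_{t+1} ≤ (1 − η_t μ') Δ_t + η_t² C + η_t D for all t ≥ 1. Then for all t ≥ 1, Δ_t ≤ ψ/(t + γ) + βD/(βμ' − 1), where ψ = max{ (γ+1)Δ_1, β²C/(βμ' − 1) }. -/
/-!
Write `a = βμ'`, `s = t + γ` and `K = βD/(a - 1)`. The bound `b(s) = ψ/s + K` is a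
supersolution of the recursion. Since `s ≥ 1 + γ ≥ a`, the contraction factor `1 - a/s` is
nonnegative, so the recursion is monotone in `Δ_t`. The choice `ψ(a - 1) ≥ β²C` gives
`(1 - a/s)ψ/s + β²C/s² ≤ ψ(s - 1)/s² ≤ ψ/(s + 1)`, and `K` solves `(1 - a/s)K + βD/s = K - K/s`.
Induction on `t`, started by `ψ ≥ (γ + 1)Δ_1`, finishes the proof.
-/

lemma rate_step {β μ' C ψ s : ℝ} (h1 : 1 < β * μ') (hs : β * μ' ≤ s) (hψ : 0 ≤ ψ)
    (hψC : β ^ 2 * C ≤ ψ * (β * μ' - 1)) :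
    (1 - β / s * μ') * (ψ / s) + (β / s) ^ 2 * C ≤ ψ / (s + 1) := by
  have hs0 : 0 < s := by linarith
  have hexpand : (1 - β / s * μ') * (ψ / s) + (β / s) ^ 2 * C
      = (ψ * (s - β * μ') + β ^ 2 * C) / s ^ 2 := by
    field_simp
  rw [hexpand, div_le_div_iff₀ (by positivity) (by linarith)]
  calc (ψ * (s - β * μ') + β ^ 2 * C) * (s + 1)
      ≤ ψ * (s - 1) * (s + 1) := by gcongr; linarith
    _ ≤ ψ * s ^ 2 := by nlinarith

lemma bias_step {β μ' D s : ℝ} (h1 : 1 < β * μ') (hs : 0 < s) (hβD : 0 ≤ β * D) :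
    (1 - β / s * μ') * (β * D / (β * μ' - 1)) + β / s * D ≤ β * D / (β * μ' - 1) := by
  have hfixed : (1 - β / s * μ') * (β * D / (β * μ' - 1)) + β / s * D
      = β * D / (β * μ' - 1) - β * D / (β * μ' - 1) / s := by
    field_simp [(by linarith : β * μ' - 1 ≠ 0)]
    ring
  have : 0 ≤ β * D / (β * μ' - 1) / s := by
    have : 0 < β * μ' - 1 := by linarith
    positivity
  linarith

lemma recursion_step_le {β μ' C D ψ s x : ℝ} (h1 : 1 < β * μ') (hs : β * μ' ≤ s)
    (hψ : 0 ≤ ψ) (hψC : β ^ 2 * C ≤ ψ * (β * μ' - 1)) (hβD : 0 ≤ β * D)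
    (hx : x ≤ ψ / s + β * D / (β * μ' - 1)) :
    (1 - β / s * μ') * x + (β / s) ^ 2 * C + β / s * D
      ≤ ψ / (s + 1) + β * D / (β * μ' - 1) := by
  have hs0 : 0 < s := by linarith
  have hcontr : 0 ≤ 1 - β / s * μ' := by
    rw [sub_nonneg, div_mul_eq_mul_div, div_le_one hs0]
    exact hs
  have hrate := rate_step h1 hs hψ hψC
  have hbias := bias_step (D := D) h1 hs0 hβD
  linarith [mul_le_mul_of_nonneg_left hx hcontr]

theorem diminishing_step_recursion_general
    (Δ : ℕ → ℝ) (hΔ : ∀ t : ℕ, 1 ≤ t → 0 ≤ Δ t)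
    (μ' C D β γ : ℝ)
    (hD : 0 ≤ D) (hβ : 0 < β)
    (h1 : 1 < β * μ') (h2 : β * μ' ≤ γ + 1)
    (hrec : ∀ t : ℕ, 1 ≤ t →
      Δ (t + 1) ≤ (1 - (β / ((t : ℝ) + γ)) * μ') * Δ t
        + (β / ((t : ℝ) + γ)) ^ 2 * C + (β / ((t : ℝ) + γ)) * D) :
    ∀ t : ℕ, 1 ≤ t →
      Δ t ≤ max ((γ + 1) * Δ 1) (β ^ 2 * C / (β * μ' - 1)) / ((t : ℝ) + γ)
        + β * D / (β * μ' - 1) := by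
  set ψ := max ((γ + 1) * Δ 1) (β ^ 2 * C / (β * μ' - 1))
  have ha : 0 < β * μ' - 1 := by linarith
  have hβD : 0 ≤ β * D := by positivity
  have hψ : 0 ≤ ψ := le_max_of_le_left (mul_nonneg (by linarith) (hΔ 1 le_rfl))
  have hψC : β ^ 2 * C ≤ ψ * (β * μ' - 1) := (div_le_iff₀ ha).1 (le_max_right _ _)
  intro t ht
  induction t, ht using Nat.le_induction with
  | base =>
    have hΔ1 : Δ 1 ≤ ψ / (1 + γ) := by
      rw [le_div_iff₀ (by linarith), mul_comm, add_comm]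
      exact le_max_left _ _
    push_cast
    linarith [div_nonneg hβD ha.le]
  | succ t ht ih =>
    have hs : β * μ' ≤ (t : ℝ) + γ := by
      have : (1 : ℝ) ≤ t := by exact_mod_cast ht
      linarith
    calc Δ (t + 1) ≤ _ := hrec t ht
      _ ≤ ψ / ((t : ℝ) + γ + 1) + β * D / (β * μ' - 1) :=
        recursion_step_le h1 hs hψ hψC hβD ih
      _ = _ := by push_cast; ring

/-- The induction lemma converting the one-round recursion with diminishing step sizes
`η_t = β/(t+γ)` into the `O(1/(t+γ))` convergence rate plus a constant bias term. -/
theorem diminishing_step_recursion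
    (Δ : ℕ → ℝ) (hΔ : ∀ t : ℕ, 1 ≤ t → 0 ≤ Δ t)
    (μ' C D β γ : ℝ)
    (hμ' : 0 < μ') (hC : 0 ≤ C) (hD : 0 ≤ D) (hβ : 0 < β) (hγ : 0 < γ)
    (h1 : 1 < β * μ') (h2 : β * μ' ≤ γ + 1)
    (hrec : ∀ t : ℕ, 1 ≤ t →
      Δ (t + 1) ≤ (1 - (β / ((t : ℝ) + γ)) * μ') * Δ t
        + (β / ((t : ℝ) + γ)) ^ 2 * C + (β / ((t : ℝ) + γ)) * D) :
    ∀ t : ℕ, 1 ≤ t →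
      Δ t ≤ max ((γ + 1) * Δ 1) (β ^ 2 * C / (β * μ' - 1)) / ((t : ℝ) + γ)
        + β * D / (β * μ' - 1) :=
  diminishing_step_recursion_general Δ hΔ μ' C D β γ hD hβ h1 h2 hrec
end
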